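/- arXiv:2208.03202 — 2 statements merged into one kernel-verified Lean document; each statement's English description precedes it below -/
import Mathlib

section
/- For n ≥ 4, the rank of the monoid IOF_n^par (the least cardinality of a generating set) equals 3n−6. -/
/-- A partial injection on `{1,...,n}`, represented by its graph. -/
structure PInj (n : ℕ) where
  R : ℕ → ℕ → Prop
  memL : ∀ ⦃x y⦄, R x y → x ∈ Set.Icc 1 n
  memR : ∀ ⦃x y⦄, R x y → y ∈ Set.Icc 1 n
  func : ∀ ⦃x y y'⦄, R x y → R x y' → y = y'
  inj : ∀ ⦃x x' y⦄, R x y → R x' y → x = x'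

namespace PInj

variable {n : ℕ}

@[ext] theorem ext {a b : PInj n} (h : ∀ x y, a.R x y ↔ b.R x y) : a = b := by
  cases a; cases b
  simp only [mk.injEq]
  funext x y
  exact propext (h x y)

instance : Mul (PInj n) :=
  ⟨fun a b =>
    { R := fun x z => ∃ y, a.R x y ∧ b.R y z
      memL := by rintro x z ⟨y, h1, _⟩; exact a.memL h1
      memR := by rintro x z ⟨y, _, h2⟩; exact b.memR h2
      func := by
        rintro x z z' ⟨y, h1, h2⟩ ⟨y', h1', h2'⟩
        obtain rfl := a.func h1 h1'
        exact b.func h2 h2'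
      inj := by
        rintro x x' z ⟨y, h1, h2⟩ ⟨y', h1', h2'⟩
        obtain rfl := b.inj h2 h2'
        exact a.inj h1 h1' }⟩

instance : One (PInj n) :=
  ⟨{ R := fun x y => x ∈ Set.Icc 1 n ∧ y = x
     memL := by rintro x y ⟨h, rfl⟩; exact h
     memR := by rintro x y ⟨h, rfl⟩; exact h
     func := by rintro x y y' ⟨_, rfl⟩ ⟨_, rfl⟩; rfl
     inj := by rintro x x' y ⟨_, rfl⟩ ⟨_, h⟩; exact h }⟩

instance : Monoid (PInj n) where
  mul_assoc a b c := by
    ext x y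
    constructor
    · rintro ⟨z, ⟨w, h1, h2⟩, h3⟩; exact ⟨w, h1, z, h2, h3⟩
    · rintro ⟨w, h1, z, h2, h3⟩; exact ⟨z, ⟨w, h1, h2⟩, h3⟩
  one_mul a := by
    ext x y
    constructor
    · rintro ⟨z, ⟨_, rfl⟩, h⟩; exact h
    · intro h; exact ⟨x, ⟨a.memL h, rfl⟩, h⟩
  mul_one a := by
    ext x y
    constructor
    · rintro ⟨z, h, _, rfl⟩; exact h
    · intro h; exact ⟨y, h, a.memR h, rfl⟩

/-- The inverse of a partial injection. -/
def inv (a : PInj n) : PInj n where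
  R := fun x y => a.R y x
  memL := by intro x y h; exact a.memR h
  memR := by intro x y h; exact a.memL h
  func := by intro x y y' h h'; exact a.inj h h'
  inj := by intro x x' y h h'; exact a.func h h'

/-- The domain of a partial injection. -/
def dom (a : PInj n) : Set ℕ := {x | ∃ y, a.R x y}

/-- The image of a partial injection. -/
def im (a : PInj n) : Set ℕ := {y | ∃ x, a.R x y}

end PInj

/-- The strict fence (zig-zag) order on `{1,...,n}`: `x ≺ y` iff `x` is odd and
`x`, `y` are adjacent.  It is generated by `i ≺ i+1` for odd `i` and `i+1 ≺ i`
for even `i`. -/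
def FenceLt (x y : ℕ) : Prop := Odd x ∧ (y = x + 1 ∨ x = y + 1)

/-- Membership in `IOF_n^par`: order-preserving, parity-preserving,
fence-preserving, and with fence-preserving inverse. -/
def IsIOF {n : ℕ} (a : PInj n) : Prop :=
  (∀ ⦃x y x' y'⦄, a.R x y → a.R x' y' → x < x' → y < y') ∧
  (∀ ⦃x y⦄, a.R x y → x % 2 = y % 2) ∧
  (∀ ⦃x y x' y'⦄, a.R x y → a.R x' y' → FenceLt x x' → FenceLt y y') ∧
  (∀ ⦃x y x' y'⦄, a.R x y → a.R x' y' → FenceLt y y' → FenceLt x x')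

/-- A partial identity: every point of the domain is fixed. -/
def IsPartialId {n : ℕ} (a : PInj n) : Prop := ∀ ⦃x y⦄, a.R x y → y = x

/-- The partial identity `v_i` with domain `{1,...,n} \ {i}`. -/
def vMap (n i : ℕ) : PInj n where
  R := fun x y => x ∈ Set.Icc 1 n ∧ x ≠ i ∧ y = x
  memL := by rintro x y ⟨h, _, rfl⟩; exact h
  memR := by rintro x y ⟨h, _, rfl⟩; exact h
  func := by rintro x y y' ⟨_, _, rfl⟩ ⟨_, _, rfl⟩; rfl
  inj := by rintro x x' y ⟨_, _, rfl⟩ ⟨_, _, h⟩; exact h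

/-- The map `u_i` with domain `{1,...,i} ∪ {i+4,...,n}`, sending `ρ ↦ ρ+2` for
`ρ ≤ i` and `ρ ↦ ρ` for `ρ ≥ i+4`. -/
def uMap (n i : ℕ) : PInj n where
  R := fun x y => x ∈ Set.Icc 1 n ∧ y ∈ Set.Icc 1 n ∧
        ((x ≤ i ∧ y = x + 2) ∨ (i + 4 ≤ x ∧ y = x))
  memL := by rintro x y ⟨h, _, _⟩; exact h
  memR := by rintro x y ⟨_, h, _⟩; exact h
  func := by
    rintro x y y' ⟨_, _, (⟨hx, rfl⟩ | ⟨hx, rfl⟩)⟩ ⟨_, _, (⟨hx', rfl⟩ | ⟨hx', rfl⟩)⟩ <;> omega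
  inj := by
    rintro x x' y ⟨_, _, (⟨hx, rfl⟩ | ⟨hx, rfl⟩)⟩ ⟨_, _, (⟨hx', h'⟩ | ⟨hx', h'⟩)⟩ <;> omega

/-- The set `J_i = {1,...,i} ∪ {i+4,...,n}`. -/
def Jset (n i : ℕ) : Set ℕ := {x | (1 ≤ x ∧ x ≤ i) ∨ (i + 4 ≤ x ∧ x ≤ n)}

/-- `G` is a generating set of the monoid `IOF_n^par`: it consists of elements of
`IOF_n^par` and every element of `IOF_n^par` is a finite product of elements of `G`. -/
def Generates (n : ℕ) (G : Set (PInj n)) : Prop :=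
  (∀ g ∈ G, IsIOF g) ∧
  ∀ a : PInj n, IsIOF a →
    ∃ l : List (PInj n), (∀ b ∈ l, b ∈ G) ∧ l.prod = a


/-!
Membership in `IOF_n^par` is a local condition (`GapPreserving`): parity is kept, neighbours go
to neighbours in the same order, and points at distance at least two stay at distance at least two.

Generation. Such a map is `p * q⁻¹` with `p`, `q` extensive (`x ≤ p x`). An extensive map that is
not a partial identity is `a' * h_{P,m}`, where `h_{P,m}` shifts by `2` the block that ends at its
last moving point and `a'` is extensive with smaller total displacement. Partial identities are
products of the `v_i`, `h_{P,m}` is `u_m` or `u_m c⁻ c⁺ u_P⁻¹` (with `c^± = u_{n-2}^{±1}`), and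
`u_{n-3} = v_{n-2} c⁺`; so the `3n - 6` maps `v_i`, `u_i^{±1}` (`1 ≤ i ≤ n-4`) and `c^±` generate.

Minimality. Factor `v_i`, `c⁺` or `u_i` (`i ≤ n-4`) into elements of `IOF_n^par`. Some factor is
defined on all but at most one, two, resp. three points, and is the first one, moves a point up,
resp. shrinks the distance between the images of `i` and `i + 4`. The shift `x ↦ a x - x` of such
a factor is constant on runs of its domain and can decrease only across three missing points;
this forces it to be `1` or `v_i`, `c⁺`, resp. `u_i` or `w_i = u_i c⁻`. Applied also to inverses,
this puts into any generating set the `n` partial identities `v_i` and `2(n-3)` further elements,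
told apart by their domains or images `{1,…,i} ∪ {i+4,…,n}`.
-/

namespace PInj

variable {n : ℕ}

theorem mul_R {a b : PInj n} {x z : ℕ} : (a * b).R x z ↔ ∃ y, a.R x y ∧ b.R y z := Iff.rfl

theorem one_R {x y : ℕ} : (1 : PInj n).R x y ↔ (1 ≤ x ∧ x ≤ n) ∧ y = x := Iff.rfl

theorem inv_R {a : PInj n} {x y : ℕ} : a.inv.R x y ↔ a.R y x := Iff.rfl

@[simp] theorem inv_inv (a : PInj n) : a.inv.inv = a := rfl

theorem mul_inv_rev (a b : PInj n) : (a * b).inv = b.inv * a.inv := by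
  ext x y
  exact ⟨fun ⟨z, h1, h2⟩ => ⟨z, h2, h1⟩, fun ⟨z, h1, h2⟩ => ⟨z, h2, h1⟩⟩

theorem inv_one : (1 : PInj n).inv = 1 := by
  ext x y
  constructor <;> rintro ⟨h, rfl⟩ <;> exact ⟨h, rfl⟩

theorem inv_list_prod (l : List (PInj n)) : l.prod.inv = (l.reverse.map inv).prod := by
  induction l with
  | nil => exact inv_one
  | cons g t ih => simp [mul_inv_rev, ih]

theorem dom_mul_subset (a b : PInj n) : (a * b).dom ⊆ a.dom :=
  fun _ ⟨_, y, h, _⟩ => ⟨y, h⟩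

theorem eq_of_R_imp {a b : PInj n} (hab : ∀ ⦃x y⦄, a.R x y → b.R x y) (hdom : b.dom ⊆ a.dom) :
    a = b := by
  ext x y
  refine ⟨fun h => hab h, fun h => ?_⟩
  obtain ⟨y', h'⟩ := hdom ⟨y, h⟩
  rwa [b.func h (hab h')]

theorem mul_inv_cancel_left_of_dom_subset {a b : PInj n} (h : b.dom ⊆ a.dom) : a * a.inv * b = b := by
  ext x y
  constructor
  · rintro ⟨z, ⟨w, hw, hw'⟩, hzy⟩
    rwa [a.inj hw' hw] at hzy
  · intro hxy
    obtain ⟨w, hw⟩ := h ⟨y, hxy⟩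
    exact ⟨x, ⟨w, hw, hw⟩, hxy⟩

theorem inv_mul_cancel_right_of_im_subset {a b : PInj n} (h : a.im ⊆ b.im) : a * b.inv * b = a := by
  ext x y
  constructor
  · rintro ⟨z, ⟨w, hw, hw'⟩, hzy⟩
    rwa [b.func hw' hzy] at hw
  · intro hxy
    obtain ⟨w, hw⟩ := h ⟨x, hxy⟩
    exact ⟨w, ⟨y, hxy, hw⟩, hw⟩

theorem isPartialId_inv {a : PInj n} (ha : IsPartialId a) : IsPartialId a.inv :=
  fun _ _ h => (ha h).symm

open Classical in
/-- Junk value `0` outside the domain. -/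
noncomputable def eval (a : PInj n) (x : ℕ) : ℕ := if h : ∃ y, a.R x y then h.choose else 0

theorem eval_eq {a : PInj n} {x y : ℕ} (h : a.R x y) : a.eval x = y := by
  have hx : ∃ y, a.R x y := ⟨y, h⟩
  rw [eval, dif_pos hx]
  exact a.func hx.choose_spec h

theorem eval_of_not_mem_dom {a : PInj n} {x : ℕ} (h : x ∉ a.dom) : a.eval x = 0 :=
  dif_neg h

/-- `a` maps the part of `D` that survives `a * b` injectively into the domain of `b`. -/
theorem card_add_card_le {a b : PInj n} {D M : Finset ℕ} (hD : ∀ x ∈ D, x ∈ (a * b).dom)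
    (hM : M ⊆ Finset.Icc 1 n) (hMb : ∀ z ∈ M, z ∉ b.dom) : D.card + M.card ≤ n := by
  have hmaps : ∀ x ∈ D, a.R x (a.eval x) ∧ a.eval x ∈ b.dom := by
    intro x hx
    obtain ⟨z, y, hxy, hyz⟩ := hD x hx
    rw [eval_eq hxy]
    exact ⟨hxy, z, hyz⟩
  have hsub : Set.MapsTo a.eval D ↑(Finset.Icc 1 n \ M) := by
    intro x hx
    obtain ⟨h1, h2⟩ := hmaps x hx
    exact Finset.mem_sdiff.2 ⟨Finset.mem_Icc.2 (a.memR h1), fun hm => hMb _ hm h2⟩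
  have hinj : Set.InjOn a.eval D := fun x hx x' hx' he =>
    a.inj (hmaps x hx).1 (he ▸ (hmaps x' hx').1)
  have hcard := Finset.card_le_card_of_injOn a.eval hsub hinj
  have hMn := Finset.card_le_card hM
  rw [Finset.card_sdiff_of_subset hM, Nat.card_Icc] at hcard
  rw [Nat.card_Icc] at hMn
  omega

end PInj

open PInj

section LocalCharacterisation

variable {n : ℕ}

/-- A reformulation of `IsIOF` which is visibly closed under composition and inversion. -/
def GapPreserving (a : PInj n) : Prop :=
  (∀ ⦃x y⦄, a.R x y → x % 2 = y % 2) ∧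
  (∀ ⦃x y x' y'⦄, a.R x y → a.R x' y' →
    (x' = x + 1 → y' = y + 1) ∧ (x + 2 ≤ x' → y + 2 ≤ y'))

namespace GapPreserving

variable {a : PInj n} {x y x' y' : ℕ}

theorem lt (ha : GapPreserving a) (h : a.R x y) (h' : a.R x' y') (hx : x < x') : y < y' := by
  rcases Nat.lt_or_ge x' (x + 2) with hx2 | hx2
  · have := (ha.2 h h').1 (by omega); omega
  · have := (ha.2 h h').2 hx2; omega

theorem lt_iff (ha : GapPreserving a) (h : a.R x y) (h' : a.R x' y') : x < x' ↔ y < y' := by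
  refine ⟨ha.lt h h', fun hy => ?_⟩
  rcases lt_trichotomy x x' with hx | rfl | hx
  · exact hx
  · have := a.func h h'; omega
  · have := ha.lt h' h hx; omega

theorem adj_iff (ha : GapPreserving a) (h : a.R x y) (h' : a.R x' y') :
    (x' = x + 1 ∨ x = x' + 1) ↔ (y' = y + 1 ∨ y = y' + 1) := by
  constructor
  · rintro (hx | hx)
    exacts [Or.inl ((ha.2 h h').1 hx), Or.inr ((ha.2 h' h).1 hx)]
  · intro hy
    rcases lt_trichotomy x x' with hx | rfl | hx
    · have := (ha.2 h h').2; omega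
    · have := a.func h h'; omega
    · have := (ha.2 h' h).2; omega

theorem one : GapPreserving (1 : PInj n) :=
  ⟨by rintro x y ⟨-, rfl⟩; rfl, by rintro x y x' y' ⟨-, rfl⟩ ⟨-, rfl⟩; omega⟩

theorem mul {b : PInj n} (ha : GapPreserving a) (hb : GapPreserving b) :
    GapPreserving (a * b) := by
  refine ⟨fun x y ⟨z, h1, h2⟩ => (ha.1 h1).trans (hb.1 h2), ?_⟩
  rintro x y x' y' ⟨z, h1, h2⟩ ⟨z', h1', h2'⟩
  exact ⟨fun hx => (hb.2 h2 h2').1 ((ha.2 h1 h1').1 hx),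
    fun hx => (hb.2 h2 h2').2 ((ha.2 h1 h1').2 hx)⟩

theorem inv (ha : GapPreserving a) : GapPreserving a.inv := by
  refine ⟨fun x y h => (ha.1 h).symm, fun x y x' y' h h' => ⟨fun hx => ?_, fun hx => ?_⟩⟩
  · have hadj := (ha.adj_iff h h').2 (Or.inl hx)
    have := (ha.lt_iff h h').2 (by omega)
    omega
  · have hlt := (ha.lt_iff h h').2 (by omega)
    have := (ha.2 h h').1
    omega

theorem list_prod {l : List (PInj n)} (hl : ∀ g ∈ l, GapPreserving g) :
    GapPreserving l.prod := by
  induction l with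
  | nil => exact one
  | cons g t ih =>
    exact (hl g List.mem_cons_self).mul (ih fun b hb => hl b (List.mem_cons_of_mem g hb))

end GapPreserving

theorem fenceLt_or_fenceLt_of_adj {x y : ℕ} (h : y = x + 1 ∨ x = y + 1) :
    FenceLt x y ∨ FenceLt y x := by
  rcases Nat.even_or_odd x with hx | hx
  · refine Or.inr ⟨?_, h.symm⟩
    rcases h with rfl | rfl
    exacts [hx.add_one, Nat.not_even_iff_odd.1 (Nat.even_add_one.1 hx)]
  · exact Or.inl ⟨hx, h⟩

theorem isIOF_iff_gapPreserving (a : PInj n) : IsIOF a ↔ GapPreserving a := by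
  have odd_iff : ∀ ⦃x y⦄, x % 2 = y % 2 → (Odd x ↔ Odd y) := by
    intro x y h; simp only [Nat.odd_iff]; omega
  constructor
  · rintro ⟨hord, hpar, hf, hfi⟩
    have adj : ∀ ⦃x y x' y'⦄, a.R x y → a.R x' y' →
        (x' = x + 1 ∨ x = x' + 1) → (y' = y + 1 ∨ y = y' + 1) := by
      intro x y x' y' h h' hx
      rcases fenceLt_or_fenceLt_of_adj hx with hx | hx
      exacts [(hf h h' hx).2, (hf h' h hx).2.symm]
    have adj' : ∀ ⦃x y x' y'⦄, a.R x y → a.R x' y' →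
        (y' = y + 1 ∨ y = y' + 1) → (x' = x + 1 ∨ x = x' + 1) := by
      intro x y x' y' h h' hy
      rcases fenceLt_or_fenceLt_of_adj hy with hy | hy
      exacts [(hfi h h' hy).2, (hfi h' h hy).2.symm]
    refine ⟨hpar, fun x y x' y' h h' => ⟨fun hx => ?_, fun hx => ?_⟩⟩
    · have := adj h h' (Or.inl hx); have := hord h h' (by omega); omega
    · have := hord h h' (by omega)
      by_contra hy
      have := adj' h h' (by omega); omega
  · intro ha
    refine ⟨fun _ _ _ _ => ha.lt, ha.1, ?_, ?_⟩
    · rintro x y x' y' h h' ⟨hodd, hadj⟩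
      exact ⟨(odd_iff (ha.1 h)).1 hodd, (ha.adj_iff h h').1 hadj⟩
    · rintro x y x' y' h h' ⟨hodd, hadj⟩
      exact ⟨(odd_iff (ha.1 h)).2 hodd, (ha.adj_iff h h').2 hadj⟩

end LocalCharacterisation

section Maps

def wMap (n i : ℕ) : PInj n where
  R x y := x ∈ Set.Icc 1 n ∧ y ∈ Set.Icc 1 n ∧ ((x ≤ i ∧ y = x) ∨ (i + 4 ≤ x ∧ y + 2 = x))
  memL _ _ h := h.1
  memR _ _ h := h.2.1
  func := by rintro x y y' ⟨-, -, h⟩ ⟨-, -, h'⟩; omega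
  inj := by rintro x x' y ⟨-, -, h⟩ ⟨-, -, h'⟩; omega

def hMap (n P m : ℕ) : PInj n where
  R x y := x ∈ Set.Icc 1 n ∧ y ∈ Set.Icc 1 n ∧
    ((x ≤ P ∧ y = x) ∨ ((P = 0 ∨ P + 2 ≤ x) ∧ x ≤ m ∧ y = x + 2) ∨ (m + 4 ≤ x ∧ y = x))
  memL _ _ h := h.1
  memR _ _ h := h.2.1
  func := by rintro x y y' ⟨⟨hx, -⟩, -, h⟩ ⟨-, -, h'⟩; omega
  inj := by rintro x x' y ⟨⟨hx, -⟩, -, h⟩ ⟨⟨hx', -⟩, -, h'⟩; omega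

variable {n : ℕ} {x y : ℕ}

theorem vMap_R {i : ℕ} : (vMap n i).R x y ↔ (1 ≤ x ∧ x ≤ n) ∧ x ≠ i ∧ y = x := Iff.rfl

theorem uMap_R {i : ℕ} : (uMap n i).R x y ↔
    (1 ≤ x ∧ x ≤ n) ∧ (1 ≤ y ∧ y ≤ n) ∧ ((x ≤ i ∧ y = x + 2) ∨ (i + 4 ≤ x ∧ y = x)) :=
  Iff.rfl

theorem wMap_R {i : ℕ} : (wMap n i).R x y ↔
    (1 ≤ x ∧ x ≤ n) ∧ (1 ≤ y ∧ y ≤ n) ∧ ((x ≤ i ∧ y = x) ∨ (i + 4 ≤ x ∧ y + 2 = x)) :=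
  Iff.rfl

theorem hMap_R {P m : ℕ} : (hMap n P m).R x y ↔ (1 ≤ x ∧ x ≤ n) ∧ (1 ≤ y ∧ y ≤ n) ∧
    ((x ≤ P ∧ y = x) ∨ ((P = 0 ∨ P + 2 ≤ x) ∧ x ≤ m ∧ y = x + 2) ∨ (m + 4 ≤ x ∧ y = x)) :=
  Iff.rfl

theorem gapPreserving_vMap (i : ℕ) : GapPreserving (vMap n i) :=
  ⟨by rintro x y ⟨-, -, rfl⟩; rfl, by rintro x y x' y' ⟨-, -, rfl⟩ ⟨-, -, rfl⟩; omega⟩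

theorem gapPreserving_uMap (i : ℕ) : GapPreserving (uMap n i) :=
  ⟨by rintro x y ⟨-, -, h⟩; omega, by rintro x y x' y' ⟨-, -, h⟩ ⟨-, -, h'⟩; omega⟩

theorem gapPreserving_hMap (P m : ℕ) : GapPreserving (hMap n P m) :=
  ⟨by rintro x y ⟨-, -, h⟩; omega,
    by rintro x y x' y' ⟨⟨hx, -⟩, -, h⟩ ⟨⟨hx', -⟩, -, h'⟩; omega⟩

theorem dom_uMap {i : ℕ} (hi : i + 2 ≤ n) : (uMap n i).dom = Jset n i := by
  ext x
  simp only [PInj.dom, Jset, Set.mem_ofPred_eq, uMap_R]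
  constructor
  · rintro ⟨y, h⟩; omega
  · intro h
    rcases h with h | h
    exacts [⟨x + 2, by omega⟩, ⟨x, by omega⟩]

theorem dom_wMap {i : ℕ} (hi : i ≤ n) : (wMap n i).dom = Jset n i := by
  ext x
  simp only [PInj.dom, Jset, Set.mem_ofPred_eq, wMap_R]
  constructor
  · rintro ⟨y, h⟩; omega
  · intro h
    rcases h with h | h
    exacts [⟨x, by omega⟩, ⟨x - 2, by omega⟩]

theorem Jset_injOn : Set.InjOn (Jset n) (Set.Iic n) := by
  have key : ∀ ⦃i j⦄, i < j → j ≤ n → Jset n i ≠ Jset n j := by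
    intro i j hij hj h
    have : i + 1 ∈ Jset n j := Or.inl ⟨by omega, by omega⟩
    rw [← h] at this
    rcases this with h' | h' <;> omega
  intro i hi j hj h
  rcases lt_trichotomy i j with hij | rfl | hij
  exacts [absurd h (key hij hj), rfl, absurd h.symm (key hij hi)]

theorem uMap_R_one_three {i : ℕ} (hi : 1 ≤ i) (hn : 3 ≤ n) : (uMap n i).R 1 3 :=
  uMap_R.2 (by omega)

theorem not_isPartialId_uMap {i : ℕ} (hi : 1 ≤ i) (hn : 3 ≤ n) : ¬IsPartialId (uMap n i) :=
  fun h => absurd (h (uMap_R_one_three hi hn)) (by omega)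

theorem not_isPartialId_wMap {i : ℕ} (hi : i + 4 ≤ n) : ¬IsPartialId (wMap n i) :=
  fun h => absurd (h (wMap_R.2 (by omega) : (wMap n i).R (i + 4) (i + 2))) (by omega)

theorem vMap_injOn : Set.InjOn (vMap n) (Set.Icc 1 n) := by
  intro i hi j _ h
  by_contra hij
  have : (vMap n j).R i i := vMap_R.2 ⟨hi, hij, rfl⟩
  rw [← h] at this
  exact this.2.1 rfl

theorem uMap_mul_inv_uMap {m : ℕ} (hm : 1 ≤ m) (hmn : m + 2 ≤ n) :
    uMap n m * (uMap n (n - 2)).inv = wMap n m := by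
  ext x y
  simp only [mul_R, inv_R, uMap_R, wMap_R]
  constructor
  · rintro ⟨z, h1, h2⟩; omega
  · intro h
    rcases h with ⟨hx, hy, h | h⟩
    exacts [⟨x + 2, by omega⟩, ⟨x, by omega⟩]

theorem vMap_mul_uMap (hn : 3 ≤ n) : vMap n (n - 2) * uMap n (n - 2) = uMap n (n - 3) := by
  ext x y
  simp only [mul_R, vMap_R, uMap_R]
  constructor
  · rintro ⟨z, h1, h2⟩; omega
  · intro h; exact ⟨x, by omega⟩

theorem hMap_zero (m : ℕ) : hMap n 0 m = uMap n m := by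
  ext x y
  rw [hMap_R, uMap_R]
  omega

theorem wMap_mul_uMap_mul_inv {P m : ℕ} (hP : 1 ≤ P) (hPm : P ≤ m) (hmn : m + 2 ≤ n) :
    wMap n m * (uMap n (n - 2) * (uMap n P).inv) = hMap n P m := by
  ext x y
  simp only [mul_R, inv_R, uMap_R, wMap_R, hMap_R]
  constructor
  · rintro ⟨z, h1, w, h2, h3⟩; omega
  · intro h
    rcases h with ⟨hx, hy, h | h | h⟩
    · exact ⟨x, by omega, x + 2, by omega⟩
    · exact ⟨x, by omega, x + 2, by omega⟩
    · exact ⟨x - 2, by omega, x, by omega⟩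

theorem vMap_list_prod_R (L : List ℕ) :
    (L.map (vMap n)).prod.R x y ↔ (1 ≤ x ∧ x ≤ n) ∧ x ∉ L ∧ y = x := by
  induction L generalizing x y with
  | nil => simp [one_R]
  | cons j t ih =>
    simp only [List.map_cons, List.prod_cons, mul_R, vMap_R, ih, List.mem_cons, not_or]
    constructor
    · rintro ⟨z, ⟨hx, hxj, rfl⟩, -, hxt, rfl⟩; exact ⟨hx, ⟨hxj, hxt⟩, rfl⟩
    · rintro ⟨hx, ⟨hxj, hxt⟩, rfl⟩; exact ⟨y, ⟨hx, hxj, rfl⟩, hx, hxt, rfl⟩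

end Maps

section Generators

variable {n : ℕ}

/-- `u_{n-2}` is the map `c⁺ : x ↦ x + 2` on `{1,…,n-2}`. -/
def uIndices (n : ℕ) : Finset ℕ := Finset.Icc 1 (n - 4) ∪ {n - 2}

open Classical in
noncomputable def gens (n : ℕ) : Finset (PInj n) :=
  (Finset.Icc 1 n).image (vMap n) ∪ (uIndices n).image (uMap n) ∪
    (uIndices n).image fun i => (uMap n i).inv

def genSubmonoid (n : ℕ) : Submonoid (PInj n) := Submonoid.closure (gens n : Set (PInj n))

theorem mem_uIndices {i : ℕ} : i ∈ uIndices n ↔ (1 ≤ i ∧ i ≤ n - 4) ∨ i = n - 2 := by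
  simp [uIndices, or_comm]

theorem card_uIndices (hn : 4 ≤ n) : (uIndices n).card = n - 3 := by
  rw [uIndices, Finset.card_union_of_disjoint (by simp; omega), Nat.card_Icc,
    Finset.card_singleton]
  omega

theorem card_gens_le (hn : 4 ≤ n) : (gens n).card ≤ 3 * n - 6 := by
  classical
  have hv := (Finset.Icc 1 n).card_image_le (f := vMap n)
  have hu := (uIndices n).card_image_le (f := uMap n)
  have hu' := (uIndices n).card_image_le (f := fun i => (uMap n i).inv)
  have := Finset.card_union_le ((Finset.Icc 1 n).image (vMap n) ∪ (uIndices n).image (uMap n))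
    ((uIndices n).image fun i => (uMap n i).inv)
  have := Finset.card_union_le ((Finset.Icc 1 n).image (vMap n)) ((uIndices n).image (uMap n))
  rw [Nat.card_Icc, card_uIndices hn] at *
  unfold gens
  omega

theorem mem_gens {g : PInj n} : g ∈ gens n ↔ (∃ i ∈ Finset.Icc 1 n, vMap n i = g) ∨
    (∃ i ∈ uIndices n, uMap n i = g) ∨ ∃ i ∈ uIndices n, (uMap n i).inv = g := by
  classical
  simp only [gens, Finset.mem_union, Finset.mem_image, or_assoc]

theorem vMap_inv (i : ℕ) : (vMap n i).inv = vMap n i := by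
  ext x y
  rw [inv_R, vMap_R, vMap_R]
  omega

theorem inv_mem_gens {g : PInj n} (hg : g ∈ gens n) : g.inv ∈ gens n := by
  rw [mem_gens] at hg ⊢
  rcases hg with ⟨i, hi, rfl⟩ | ⟨i, hi, rfl⟩ | ⟨i, hi, rfl⟩
  · exact Or.inl ⟨i, hi, (vMap_inv i).symm⟩
  · exact Or.inr (Or.inr ⟨i, hi, rfl⟩)
  · exact Or.inr (Or.inl ⟨i, hi, rfl⟩)

theorem isIOF_of_mem_gens {g : PInj n} (hg : g ∈ gens n) : IsIOF g := by
  rw [isIOF_iff_gapPreserving]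
  rcases mem_gens.1 hg with ⟨i, -, rfl⟩ | ⟨i, -, rfl⟩ | ⟨i, -, rfl⟩
  exacts [gapPreserving_vMap i, gapPreserving_uMap i, (gapPreserving_uMap i).inv]

theorem inv_mem_genSubmonoid {a : PInj n} (ha : a ∈ genSubmonoid n) : a.inv ∈ genSubmonoid n := by
  induction ha using Submonoid.closure_induction with
  | mem g hg => exact Submonoid.subset_closure (inv_mem_gens hg)
  | one => rw [PInj.inv_one]; exact one_mem _
  | mul a b _ _ ha hb => rw [PInj.mul_inv_rev]; exact mul_mem hb ha

theorem vMap_mem_genSubmonoid {i : ℕ} (hi : i ∈ Finset.Icc 1 n) : vMap n i ∈ genSubmonoid n :=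
  Submonoid.subset_closure (mem_gens.2 (Or.inl ⟨i, hi, rfl⟩))

theorem mem_genSubmonoid_of_isPartialId {a : PInj n} (ha : IsPartialId a) :
    a ∈ genSubmonoid n := by
  classical
  set L := ((Finset.Icc 1 n).filter (· ∉ a.dom)).toList
  have hL : (L.map (vMap n)).prod = a := by
    ext x y
    simp only [vMap_list_prod_R, L, Finset.mem_toList, Finset.mem_filter, Finset.mem_Icc,
      not_and, not_not]
    constructor
    · rintro ⟨hx, hdom, rfl⟩
      obtain ⟨z, hz⟩ := hdom hx
      rwa [ha hz] at hz
    · intro h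
      exact ⟨a.memL h, fun _ => ⟨y, h⟩, ha h⟩
  rw [← hL]
  refine Submonoid.list_prod_mem _ fun g hg => ?_
  obtain ⟨i, hi, rfl⟩ := List.mem_map.1 hg
  exact vMap_mem_genSubmonoid (Finset.mem_filter.1 (Finset.mem_toList.1 hi)).1

theorem uMap_mem_genSubmonoid (hn : 4 ≤ n) {m : ℕ} (h1 : 1 ≤ m) (h2 : m + 2 ≤ n) :
    uMap n m ∈ genSubmonoid n := by
  have hgen : ∀ i ∈ uIndices n, uMap n i ∈ genSubmonoid n := fun i hi =>
    Submonoid.subset_closure (mem_gens.2 (Or.inr (Or.inl ⟨i, hi, rfl⟩)))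
  have hc := hgen (n - 2) (Finset.mem_union_right _ (Finset.mem_singleton_self _))
  rcases (by omega : m ≤ n - 4 ∨ m = n - 3 ∨ m = n - 2) with hm | rfl | rfl
  · exact hgen m (Finset.mem_union_left _ (Finset.mem_Icc.2 ⟨h1, hm⟩))
  · rw [← vMap_mul_uMap (by omega)]
    exact mul_mem (vMap_mem_genSubmonoid (Finset.mem_Icc.2 (by omega))) hc
  · exact hc

theorem hMap_mem_genSubmonoid (hn : 4 ≤ n) {P m : ℕ} (hP : P = 0 ∨ 1 ≤ P ∧ P ≤ m)
    (h1 : 1 ≤ m) (h2 : m + 2 ≤ n) : hMap n P m ∈ genSubmonoid n := by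
  rcases hP with rfl | ⟨hP1, hPm⟩
  · rw [hMap_zero]
    exact uMap_mem_genSubmonoid hn h1 h2
  · rw [← wMap_mul_uMap_mul_inv hP1 hPm h2, ← uMap_mul_inv_uMap h1 h2]
    have hu := fun {i} (hi : 1 ≤ i) (hin : i + 2 ≤ n) => uMap_mem_genSubmonoid hn hi hin
    exact mul_mem (mul_mem (hu h1 h2) (inv_mem_genSubmonoid (hu (by omega) (by omega))))
      (mul_mem (hu (by omega) (by omega)) (inv_mem_genSubmonoid (hu hP1 (by omega))))

end Generators

section Extensive

variable {n : ℕ} {a : PInj n}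

def Extensive (a : PInj n) : Prop := ∀ ⦃x y⦄, a.R x y → x ≤ y

def upperPart (a : PInj n) (ha : GapPreserving a) : PInj n where
  R x y := ∃ z, a.R x z ∧ y = max x z
  memL _ _ := fun ⟨_, h, _⟩ => a.memL h
  memR := by
    rintro x y ⟨z, h, rfl⟩
    obtain ⟨⟨hx, hxn⟩, hz, hzn⟩ := And.intro (a.memL h) (a.memR h)
    exact ⟨by omega, by omega⟩
  func := by rintro x y y' ⟨z, h, rfl⟩ ⟨z', h', rfl⟩; rw [a.func h h']
  inj := by
    rintro x x' y ⟨z, h, rfl⟩ ⟨z', h', he⟩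
    rcases lt_trichotomy x x' with hx | rfl | hx
    · have := ha.lt h h' hx; omega
    · rfl
    · have := ha.lt h' h hx; omega

theorem exists_extensive_mul_inv (ha : GapPreserving a) :
    ∃ p q : PInj n, GapPreserving p ∧ GapPreserving q ∧ Extensive p ∧ Extensive q ∧
      p * q.inv = a := by
  set p := upperPart a ha
  have hp : GapPreserving p := by
    refine ⟨by rintro x y ⟨z, h, rfl⟩; have := ha.1 h; omega, ?_⟩
    rintro x y x' y' ⟨z, h, rfl⟩ ⟨z', h', rfl⟩
    have := ha.2 h h'
    omega
  refine ⟨p, a.inv * p, hp, ha.inv.mul hp, fun x y ⟨z, h, hy⟩ => hy ▸ le_max_left x z,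
    fun x y ⟨z, h, w, h', hy⟩ => by rw [a.func h' h] at hy; omega, ?_⟩
  rw [PInj.mul_inv_rev, PInj.inv_inv, ← mul_assoc]
  exact mul_inv_cancel_left_of_dom_subset fun x ⟨z, h⟩ => ⟨max x z, z, h, rfl⟩

noncomputable def totalDisp (a : PInj n) : ℕ := ∑ x ∈ Finset.Icc 1 n, (a.eval x - x)

/-- Relative to its last moving point `xt ↦ yt` and the last fixed point `P < xt` (or `P = 0`),
an extensive map splits into three blocks. -/
theorem Extensive.trichotomy (ha : GapPreserving a) (hext : Extensive a) {xt yt P : ℕ}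
    (hxt : a.R xt yt) (hlt : xt < yt) (htop : ∀ ⦃x y⦄, a.R x y → x < y → x ≤ xt)
    (hP : P < xt) (hPfix : P = 0 ∨ a.R P P) (hPmax : ∀ z, P < z → z < xt → ¬a.R z z)
    {x y : ℕ} (h : a.R x y) :
    y ≤ P ∨ (x ≤ xt ∧ (P = 0 ∨ P + 2 ≤ x) ∧ x + 2 ≤ y ∧ y ≤ yt) ∨ (yt + 2 ≤ y ∧ y = x) := by
  have hxy := hext h
  have hpar := ha.1 h
  have hx1 := (a.memL h).1
  rcases le_or_gt x P with hxP | hxP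
  · have hPP : a.R P P := hPfix.resolve_left (by omega)
    rcases hxP.lt_or_eq with hxP | rfl
    · exact Or.inl (ha.lt h hPP hxP).le
    · exact Or.inl (a.func h hPP).le
  rcases le_or_gt x xt with hxt' | hxt'
  · have hmoves : x ≠ y := by
      rintro rfl
      rcases hxt'.lt_or_eq with hxt' | rfl
      · exact hPmax x hxP hxt' h
      · have := a.func h hxt; omega
    have hyt : y ≤ yt := by
      rcases hxt'.lt_or_eq with hxt' | rfl
      · exact (ha.lt h hxt hxt').le
      · exact (a.func h hxt).le
    refine Or.inr (Or.inl ⟨hxt', ?_, by omega, hyt⟩)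
    rcases hPfix with hP0 | hPP
    · exact Or.inl hP0
    · have := (ha.2 hPP h).1
      omega
  · have hyx : y = x := by
      by_contra hne
      have := htop h (by omega)
      omega
    have := (ha.2 hxt h).1
    have := (ha.2 hxt h).2
    omega

theorem Extensive.exists_blocks (ha : GapPreserving a) (hext : Extensive a)
    (hne : ¬IsPartialId a) :
    ∃ xt yt P, a.R xt yt ∧ xt < yt ∧ P < xt ∧ ∀ ⦃x y⦄, a.R x y →
      y ≤ P ∨ (x ≤ xt ∧ (P = 0 ∨ P + 2 ≤ x) ∧ x + 2 ≤ y ∧ y ≤ yt) ∨ (yt + 2 ≤ y ∧ y = x) := by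
  classical
  obtain ⟨x₀, hx₀, hmove₀⟩ : ∃ x, x ≤ n ∧ ∃ y, a.R x y ∧ x < y := by
    simp only [IsPartialId, not_forall] at hne
    obtain ⟨x, y, h, hne⟩ := hne
    exact ⟨x, (a.memL h).2, y, h, lt_of_le_of_ne (hext h) (Ne.symm hne)⟩
  set xt := Nat.findGreatest (fun x => ∃ y, a.R x y ∧ x < y) n
  obtain ⟨yt, hxt, hlt⟩ := Nat.findGreatest_spec (P := fun x => ∃ y, a.R x y ∧ x < y) hx₀ hmove₀
  have htop : ∀ ⦃x y⦄, a.R x y → x < y → x ≤ xt :=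
    fun x y h hxy => Nat.le_findGreatest (a.memL h).2 ⟨y, h, hxy⟩
  set P := Nat.findGreatest (fun z => a.R z z) (xt - 1)
  have hxt1 := (a.memL hxt).1
  have hP : P < xt := (Nat.findGreatest_le _).trans_lt (by omega)
  have hPfix : P = 0 ∨ a.R P P := by
    by_cases hP0 : P = 0
    exacts [Or.inl hP0, Or.inr (Nat.findGreatest_of_ne_zero (P := fun z => a.R z z) rfl hP0)]
  have hPmax : ∀ z, P < z → z < xt → ¬a.R z z :=
    fun z hPz hz => Nat.findGreatest_is_greatest (P := fun z => a.R z z) hPz (by omega)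
  exact ⟨xt, yt, P, hxt, hlt, hP, fun x y h =>
    Extensive.trichotomy ha hext hxt hlt htop hP hPfix hPmax h⟩

theorem Extensive.exists_hMap_factor (ha : GapPreserving a) (hext : Extensive a)
    (hne : ¬IsPartialId a) :
    ∃ P m, (P = 0 ∨ 1 ≤ P ∧ P ≤ m) ∧ 1 ≤ m ∧ m + 2 ≤ n ∧
      a * (hMap n P m).inv * hMap n P m = a ∧ Extensive (a * (hMap n P m).inv) ∧
      totalDisp (a * (hMap n P m).inv) < totalDisp a := by
  obtain ⟨xt, yt, P, hxt, hlt, hP, hreg⟩ := hext.exists_blocks ha hne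
  have hxtP := hreg hxt
  have hytn := (a.memR hxt).2
  have hpar := ha.1 hxt
  -- The block shifted by `h_{P,m}` ends at `m`, and its image at `a xt = m + 2`.
  set m := yt - 2
  refine ⟨P, m, by omega, by omega, by omega, ?_, ?_, ?_⟩
  · refine inv_mul_cancel_right_of_im_subset fun y ⟨x, h⟩ => ?_
    show ∃ w, (hMap n P m).R w y
    have := hreg h
    obtain ⟨⟨hx1, hxn⟩, hy1, hyn⟩ := And.intro (a.memL h) (a.memR h)
    rcases this with hy | hy | hy
    exacts [⟨y, hMap_R.2 (by omega)⟩, ⟨y - 2, hMap_R.2 (by omega)⟩, ⟨y, hMap_R.2 (by omega)⟩]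
  · rintro x y ⟨z, h, hz⟩
    have := hreg h
    have := hext h
    rw [inv_R, hMap_R] at hz
    omega
  · have hle : ∀ x ∈ Finset.Icc 1 n,
        (a * (hMap n P m).inv).eval x - x ≤ a.eval x - x := by
      intro x _
      by_cases hx : x ∈ (a * (hMap n P m).inv).dom
      · obtain ⟨y, z, h, hz⟩ := hx
        rw [eval_eq (show (a * (hMap n P m).inv).R x y from ⟨z, h, hz⟩), eval_eq h]
        rw [inv_R, hMap_R] at hz
        omega
      · rw [eval_of_not_mem_dom hx]
        omega
    refine Finset.sum_lt_sum hle ⟨xt, Finset.mem_Icc.2 (a.memL hxt), ?_⟩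
    rw [eval_eq hxt, eval_eq (⟨yt, hxt, hMap_R.2 (by omega)⟩ : (a * (hMap n P m).inv).R xt m)]
    omega

theorem Extensive.mem_genSubmonoid (hn : 4 ≤ n) (ha : GapPreserving a) (hext : Extensive a) :
    a ∈ genSubmonoid n := by
  induction hd : totalDisp a using Nat.strong_induction_on generalizing a with
  | _ d ih =>
  by_cases hid : IsPartialId a
  · exact mem_genSubmonoid_of_isPartialId hid
  obtain ⟨P, m, hPm, hm1, hmn, heq, hext', hlt⟩ := hext.exists_hMap_factor ha hid
  rw [← heq]
  exact mul_mem (ih _ (hd ▸ hlt) (ha.mul (gapPreserving_hMap P m).inv) hext' rfl)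
    (hMap_mem_genSubmonoid hn hPm hm1 hmn)

theorem GapPreserving.mem_genSubmonoid (hn : 4 ≤ n) (ha : GapPreserving a) :
    a ∈ genSubmonoid n := by
  obtain ⟨p, q, hp, hq, hpext, hqext, rfl⟩ := exists_extensive_mul_inv ha
  exact mul_mem (hpext.mem_genSubmonoid hn hp) (inv_mem_genSubmonoid (hqext.mem_genSubmonoid hn hq))

theorem gens_generates (hn : 4 ≤ n) : Generates n (gens n : Set (PInj n)) := by
  refine ⟨fun g hg => isIOF_of_mem_gens hg, fun a ha => ?_⟩
  exact Submonoid.exists_list_of_mem_closure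
    (((isIOF_iff_gapPreserving a).1 ha).mem_genSubmonoid hn)

end Extensive

section Shifts

variable {n : ℕ} {a : PInj n} {x y x' y' : ℕ}

namespace GapPreserving

theorem shift_le_of_le_add_three (ha : GapPreserving a) (h : a.R x y) (h' : a.R x' y')
    (hlt : x < x') (hle : x' ≤ x + 3) : y + x' ≤ x + y' := by
  have := ha.1 h
  have := ha.1 h'
  have := ha.2 h h'
  omega

/-- `y + x' ≤ x + y'` says that the shift `z ↦ a z - z` does not decrease from `x` to `x'`. -/
theorem shift_le (ha : GapPreserving a) (h : a.R x y) (h' : a.R x' y') (hlt : x < x')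
    (hgap : ∀ z, x < z → z + 3 ≤ x' → z ∈ a.dom ∨ z + 1 ∈ a.dom ∨ z + 2 ∈ a.dom) :
    y + x' ≤ x + y' := by
  induction hd : x' - x using Nat.strong_induction_on generalizing x y with
  | _ d ih =>
  rcases le_or_gt x' (x + 3) with hle | hgt
  · exact ha.shift_le_of_le_add_three h h' hlt hle
  obtain ⟨z, w, hzw, hz1, hz2⟩ : ∃ z w, a.R z w ∧ x < z ∧ z ≤ x + 3 := by
    rcases hgap (x + 1) (by omega) (by omega) with ⟨w, hw⟩ | ⟨w, hw⟩ | ⟨w, hw⟩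
    exacts [⟨_, w, hw, by omega, by omega⟩, ⟨_, w, hw, by omega, by omega⟩,
      ⟨_, w, hw, by omega, by omega⟩]
  have h1 := ha.shift_le_of_le_add_three h hzw hz1 hz2
  have h2 := ih (x' - z) (by omega) hzw (by omega) (fun u hu hu' => hgap u (by omega) hu') rfl
  omega

theorem exists_R_of_Icc_subset_dom (ha : GapPreserving a) (h : a.R x y) (hx : x ≤ x')
    (hdom : ∀ z, x ≤ z → z ≤ x' → z ∈ a.dom) : ∃ y', a.R x' y' ∧ y' + x = y + x' := by
  induction x', hx using Nat.le_induction with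
  | base => exact ⟨y, h, rfl⟩
  | succ k hk ih =>
    obtain ⟨y', hy', hshift⟩ := ih fun z hz hz' => hdom z hz (by omega)
    obtain ⟨w, hw⟩ := hdom (k + 1) (by omega) le_rfl
    exact ⟨w, hw, by have := (ha.2 hy' hw).1 rfl; omega⟩

theorem le_of_R_of_forall_le_mem_dom (ha : GapPreserving a) (h : a.R x y)
    (hdom : ∀ z, 1 ≤ z → z ≤ x → z ∈ a.dom) : x ≤ y := by
  have hx := (a.memL h).1
  obtain ⟨w, hw⟩ := hdom 1 le_rfl hx
  obtain ⟨y', hy', hshift⟩ := ha.exists_R_of_Icc_subset_dom hw hx hdom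
  have := a.func h hy'
  have := (a.memR hw).1
  omega

theorem le_of_R_of_forall_ge_mem_dom (ha : GapPreserving a) (h : a.R x y)
    (hdom : ∀ z, x ≤ z → z ≤ n → z ∈ a.dom) : y ≤ x := by
  obtain ⟨y', hy', hshift⟩ := ha.exists_R_of_Icc_subset_dom h (a.memL h).2 hdom
  have := (a.memR hy').2
  omega

end GapPreserving

theorem PInj.exists_consecutive_shift_lt {p q p' q' : ℕ} (hp : a.R p q) (hp' : a.R p' q')
    (hlt : p < p') (hdec : p + q' < q + p') :
    ∃ c d c' d', a.R c d ∧ a.R c' d' ∧ p ≤ c ∧ c < c' ∧ c' ≤ p' ∧ c + d' < d + c' ∧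
      ∀ z, c < z → z < c' → z ∉ a.dom := by
  induction hd : p' - p using Nat.strong_induction_on generalizing p q p' q' with
  | _ d ih =>
  by_cases hmid : ∃ z w, p < z ∧ z < p' ∧ a.R z w
  · obtain ⟨z, w, h1, h2, hzw⟩ := hmid
    rcases le_or_gt (q + z) (p + w) with hcase | hcase
    · obtain ⟨c, d, c', d', r1, r2, r3, r4, r5, r6, r7⟩ :=
        ih (p' - z) (by omega) hzw hp' h2 (by omega) rfl
      exact ⟨c, d, c', d', r1, r2, by omega, r4, r5, r6, r7⟩
    · obtain ⟨c, d, c', d', r1, r2, r3, r4, r5, r6, r7⟩ :=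
        ih (z - p) (by omega) hp hzw h1 (by omega) rfl
      exact ⟨c, d, c', d', r1, r2, r3, r4, by omega, r6, r7⟩
  · simp only [not_exists, not_and] at hmid
    exact ⟨p, q, p', q', hp, hp', le_rfl, hlt, le_rfl, hdec,
      fun z h1 h2 ⟨w, hw⟩ => hmid z w h1 h2 hw⟩

end Shifts

section Classification

variable {n : ℕ} {a : PInj n}

theorem GapPreserving.isPartialId (hn : 2 ≤ n) (ha : GapPreserving a)
    (hdom : ∀ z z', 1 ≤ z → z < z' → z' ≤ n → z ∉ a.dom → z' ∉ a.dom → False) :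
    IsPartialId a := by
  have hgap : ∀ x x', x' ≤ n → ∀ z, x < z → z + 3 ≤ x' →
      z ∈ a.dom ∨ z + 1 ∈ a.dom ∨ z + 2 ∈ a.dom := by
    intro x x' _ z hz hz'
    by_contra hc
    simp only [not_or] at hc
    exact hdom z (z + 1) (by omega) (by omega) (by omega) hc.1 hc.2.1
  have hmem : ∀ z, 1 ≤ z → z + 1 ≤ n → ∃ t w, a.R t w ∧ z ≤ t ∧ t ≤ z + 1 := by
    intro z hz hz'
    by_contra hc
    simp only [not_exists, not_and] at hc
    exact hdom z (z + 1) hz (by omega) hz' (fun ⟨w, hw⟩ => hc z w hw le_rfl (by omega))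
      (fun ⟨w, hw⟩ => hc (z + 1) w hw (by omega) le_rfl)
  intro x y h
  obtain ⟨⟨hx1, hxn⟩, hy1, hyn⟩ := And.intro (a.memL h) (a.memR h)
  have hpar := ha.1 h
  rcases lt_trichotomy x y with hxy | hxy | hxy
  · obtain ⟨t, w, htw, ht1, ht2⟩ := hmem (n - 1) (by omega) (by omega)
    have := (a.memR htw).2
    rcases lt_or_ge x t with hxt | hxt
    · have := ha.shift_le h htw hxt (hgap x t (a.memL htw).2)
      omega
    · omega
  · exact hxy.symm
  · obtain ⟨t, w, htw, ht1, ht2⟩ := hmem 1 le_rfl (by omega)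
    have := (a.memR htw).1
    rcases lt_or_ge t x with htx | htx
    · have := ha.shift_le htw h htx (hgap t x hxn)
      omega
    · omega

theorem GapPreserving.mem_dom_iff_of_R_lt (hn : 4 ≤ n) (ha : GapPreserving a) {x₀ y₀ : ℕ}
    (h₀ : a.R x₀ y₀) (hlt : x₀ < y₀)
    (hdom : ∀ z₁ z₂ z₃, 1 ≤ z₁ → z₁ < z₂ → z₂ < z₃ → z₃ ≤ n →
      z₁ ∉ a.dom → z₂ ∉ a.dom → z₃ ∉ a.dom → False) :
    ∀ z, 1 ≤ z → z ≤ n → (z ∈ a.dom ↔ z + 2 ≤ n) := by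
  have hgap : ∀ x x', x' ≤ n → ∀ z, x < z → z + 3 ≤ x' →
      z ∈ a.dom ∨ z + 1 ∈ a.dom ∨ z + 2 ∈ a.dom := by
    intro x x' _ z hz hz'
    by_contra hc
    simp only [not_or] at hc
    exact hdom z (z + 1) (z + 2) (by omega) (by omega) (by omega) (by omega) hc.1 hc.2.1 hc.2.2
  have hpar := ha.1 h₀
  have hy₀ := (a.memR h₀).2
  have hle : ∀ ⦃t w⦄, a.R t w → t + 2 ≤ n := by
    intro t w htw
    have := (a.memR htw).2
    rcases le_or_gt t x₀ with ht | ht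
    · have := (a.memL h₀).2; omega
    · have := ha.shift_le h₀ htw ht (hgap x₀ t (a.memL htw).2)
      omega
  refine fun z hz _ => ⟨fun ⟨w, hw⟩ => hle hw, fun hz' => ?_⟩
  by_contra hzd
  refine hdom z (n - 1) n hz (by omega) (by omega) le_rfl hzd ?_ ?_ <;>
    exact fun ⟨w, hw⟩ => absurd (hle hw) (by omega)

theorem GapPreserving.eq_uMap_top (hn : 4 ≤ n) (ha : GapPreserving a) {x₀ y₀ : ℕ}
    (h₀ : a.R x₀ y₀) (hlt : x₀ < y₀)
    (hdom : ∀ z₁ z₂ z₃, 1 ≤ z₁ → z₁ < z₂ → z₂ < z₃ → z₃ ≤ n →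
      z₁ ∉ a.dom → z₂ ∉ a.dom → z₃ ∉ a.dom → False) :
    a = uMap n (n - 2) := by
  have hdom' := ha.mem_dom_iff_of_R_lt hn h₀ hlt hdom
  have hle : ∀ ⦃x y⦄, a.R x y → x + 2 ≤ n := fun x y h =>
    (hdom' x (a.memL h).1 (a.memL h).2).1 ⟨y, h⟩
  obtain ⟨w₁, hw₁⟩ := (hdom' 1 le_rfl (by omega)).2 (by omega)
  have hshift : ∀ ⦃x y⦄, a.R x y → y + 1 = w₁ + x := by
    intro x y h
    have hx := hle h
    obtain ⟨y', hy', hs⟩ := ha.exists_R_of_Icc_subset_dom hw₁ (a.memL h).1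
      fun z hz hz' => (hdom' z hz (by omega)).2 (by omega)
    rw [a.func h hy']
    omega
  obtain ⟨w, hw⟩ := (hdom' (n - 2) (by omega) (by omega)).2 (by omega)
  have := hshift hw
  have := hshift h₀
  have := (a.memR hw).2
  have := ha.1 h₀
  refine eq_of_R_imp (fun x y h => uMap_R.2 ?_) ?_
  · have := hshift h
    have := hle h
    obtain ⟨⟨hx1, hxn⟩, hy1, hyn⟩ := And.intro (a.memL h) (a.memR h)
    omega
  · rw [dom_uMap (by omega)]
    rintro z (hz | hz)
    exacts [(hdom' z hz.1 (by omega)).2 (by omega), absurd hz (by omega)]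

theorem GapPreserving.exists_hole (ha : GapPreserving a) {p q p' q' : ℕ}
    (hp : a.R p q) (hp' : a.R p' q') (hlt : p < p') (hdec : p + q' < q + p')
    (hdom : ∀ z₁ z₂ z₃ z₄, 1 ≤ z₁ → z₁ < z₂ → z₂ < z₃ → z₃ < z₄ → z₄ ≤ n →
      z₁ ∉ a.dom → z₂ ∉ a.dom → z₃ ∉ a.dom → z₄ ∉ a.dom → False) :
    ∃ c d d', a.R c d ∧ a.R (c + 4) d' ∧ p ≤ c ∧ c + 4 ≤ p' ∧ d' < d + 4 ∧
      ∀ z, 1 ≤ z → z ≤ n → (z ∈ a.dom ↔ z ≤ c ∨ c + 4 ≤ z) := by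
  obtain ⟨c, d, c', d', hc, hc', hpc, hcc', hcp', hdec', hgap⟩ :=
    PInj.exists_consecutive_shift_lt hp hp' hlt hdec
  have h4 : c + 4 ≤ c' := by
    by_contra h
    have := ha.shift_le_of_le_add_three hc hc' hcc' (by omega)
    omega
  have hcn := (a.memL hc').2
  obtain rfl : c' = c + 4 := by
    by_contra h
    exact hdom (c + 1) (c + 2) (c + 3) (c + 4) (by omega) (by omega) (by omega) (by omega)
      (by omega) (hgap _ (by omega) (by omega)) (hgap _ (by omega) (by omega))
      (hgap _ (by omega) (by omega)) (hgap _ (by omega) (by omega))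
  refine ⟨c, d, d', hc, hc', hpc, hcp', by omega, fun z h1 h2 => ⟨fun hz => ?_, fun hz => ?_⟩⟩
  · by_contra
    exact hgap z (by omega) (by omega) hz
  · by_contra hzd
    rcases hz with hz | hz
    · exact hdom z (c + 1) (c + 2) (c + 3) h1 (by omega) (by omega) (by omega) (by omega) hzd
        (hgap _ (by omega) (by omega)) (hgap _ (by omega) (by omega))
        (hgap _ (by omega) (by omega))
    · exact hdom (c + 1) (c + 2) (c + 3) z (by omega) (by omega) (by omega) (by omega) h2
        (hgap _ (by omega) (by omega)) (hgap _ (by omega) (by omega))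
        (hgap _ (by omega) (by omega)) hzd

theorem GapPreserving.eq_uMap_or_eq_wMap_of_hole (ha : GapPreserving a) {c d d' : ℕ}
    (hc : a.R c d) (hc' : a.R (c + 4) d') (hdec : d' < d + 4)
    (hdom : ∀ z, 1 ≤ z → z ≤ n → (z ∈ a.dom ↔ z ≤ c ∨ c + 4 ≤ z)) :
    a = uMap n c ∨ a = wMap n c := by
  have hc1 := (a.memL hc).1
  have hcn := (a.memL hc').2
  have hval : ∀ ⦃x y⦄, a.R x y →
      (x ≤ c ∧ y + c = d + x) ∨ (c + 4 ≤ x ∧ y + (c + 4) = d' + x) := by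
    intro x y h
    obtain ⟨hx1, hxn⟩ := a.memL h
    rcases (hdom x hx1 hxn).1 ⟨y, h⟩ with hxc | hxc
    · obtain ⟨y', hy', hs⟩ := ha.exists_R_of_Icc_subset_dom h hxc
        fun z hz hz' => (hdom z (by omega) (by omega)).2 (Or.inl hz')
      rw [a.func hy' hc] at hs
      omega
    · obtain ⟨y', hy', hs⟩ := ha.exists_R_of_Icc_subset_dom hc' hxc
        fun z hz hz' => (hdom z (by omega) (by omega)).2 (Or.inr hz)
      rw [a.func hy' h] at hs
      omega
  have hJ : Jset n c ⊆ a.dom := by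
    rintro z (hz | hz)
    exacts [(hdom z hz.1 (by omega)).2 (Or.inl hz.2), (hdom z (by omega) hz.2).2 (Or.inr hz.1)]
  obtain ⟨w₁, hw₁⟩ := hJ (Or.inl ⟨le_rfl, hc1⟩)
  obtain ⟨w, hw⟩ := hJ (Or.inr ⟨hcn, le_rfl⟩)
  have := hval hw₁
  have := hval hw
  have := (a.memR hw₁).1
  have := (a.memR hw).2
  have := (ha.2 hc hc').2 (by omega)
  have := ha.1 hc
  have := ha.1 hc'
  have hdd : (d = c + 2 ∧ d' = c + 4) ∨ (d = c ∧ d' = c + 2) := by omega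
  rcases hdd with ⟨rfl, rfl⟩ | ⟨rfl, rfl⟩
  · refine Or.inl (eq_of_R_imp (fun x y h => uMap_R.2 ?_) (by rwa [dom_uMap (by omega)]))
    have := hval h
    obtain ⟨⟨hx1, hxn⟩, hy1, hyn⟩ := And.intro (a.memL h) (a.memR h)
    omega
  · refine Or.inr (eq_of_R_imp (fun x y h => wMap_R.2 ?_) (by rwa [dom_wMap (by omega)]))
    have := hval h
    obtain ⟨⟨hx1, hxn⟩, hy1, hyn⟩ := And.intro (a.memL h) (a.memR h)
    omega

theorem GapPreserving.eq_uMap_or_eq_wMap (ha : GapPreserving a) {p q p' q' : ℕ}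
    (hp : a.R p q) (hp' : a.R p' q') (hlt : p < p') (hdec : p + q' < q + p')
    (hdom : ∀ z₁ z₂ z₃ z₄, 1 ≤ z₁ → z₁ < z₂ → z₂ < z₃ → z₃ < z₄ → z₄ ≤ n →
      z₁ ∉ a.dom → z₂ ∉ a.dom → z₃ ∉ a.dom → z₄ ∉ a.dom → False) :
    ∃ m, p ≤ m ∧ m + 4 ≤ p' ∧ (a = uMap n m ∨ a = wMap n m) := by
  obtain ⟨c, d, d', hc, hc', hpc, hcp', hdec', hdom'⟩ := ha.exists_hole hp hp' hlt hdec hdom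
  exact ⟨c, hpc, hcp', ha.eq_uMap_or_eq_wMap_of_hole hc hc' hdec' hdom'⟩

end Classification

section Factorisations

variable {n : ℕ}

theorem dom_list_prod_subset (l₁ l₂ : List (PInj n)) (g : PInj n) :
    (l₁ ++ g :: l₂).prod.dom ⊆ (l₁.prod * g).dom := by
  rw [List.prod_append, List.prod_cons, ← mul_assoc]
  exact dom_mul_subset _ _

theorem exists_split_of_list_prod_R_lt {l : List (PInj n)} {x y : ℕ} (h : l.prod.R x y)
    (hxy : x < y) : ∃ l₁ g l₂, l = l₁ ++ g :: l₂ ∧ ∃ s u, g.R s u ∧ s < u := by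
  induction l generalizing x with
  | nil => obtain ⟨-, rfl⟩ := h; omega
  | cons g t ih =>
    obtain ⟨p, hgp, htp⟩ := h
    rcases lt_or_ge x p with hxp | hxp
    · exact ⟨[], g, t, rfl, x, p, hgp, hxp⟩
    · obtain ⟨l₁, g', l₂, rfl, hs⟩ := ih htp (by omega)
      exact ⟨g :: l₁, g', l₂, rfl, hs⟩

theorem exists_split_of_list_prod_shift_lt {l : List (PInj n)}
    (hl : ∀ g ∈ l, GapPreserving g) {x y x' y' : ℕ} (h : l.prod.R x y) (h' : l.prod.R x' y')
    (hlt : x < x') (hdec : x + y' < y + x') :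
    ∃ l₁ g l₂, l = l₁ ++ g :: l₂ ∧ ∃ s s' u u', l₁.prod.R x s ∧ l₁.prod.R x' s' ∧
      g.R s u ∧ g.R s' u' ∧ s < s' ∧ s + u' < u + s' := by
  induction l generalizing x x' with
  | nil => obtain ⟨-, rfl⟩ := h; obtain ⟨-, rfl⟩ := h'; omega
  | cons g t ih =>
    obtain ⟨p, hgp, htp⟩ := h
    obtain ⟨p', hgp', htp'⟩ := h'
    have hpp := (hl g List.mem_cons_self).lt hgp hgp' hlt
    rcases lt_or_ge (x + p') (p + x') with hcase | hcase
    · exact ⟨[], g, t, rfl, x, x', p, p', ⟨(g.memL hgp), rfl⟩, ⟨(g.memL hgp'), rfl⟩,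
        hgp, hgp', hlt, hcase⟩
    · obtain ⟨l₁, g', l₂, rfl, s, s', u, u', h₁, h₁', hrest⟩ :=
        ih (fun b hb => hl b (List.mem_cons_of_mem g hb)) htp htp' hpp (by omega)
      exact ⟨g :: l₁, g', l₂, rfl, s, s', u, u', ⟨p, hgp, h₁⟩, ⟨p', hgp', h₁'⟩, hrest⟩

theorem GapPreserving.eq_one_or_eq_vMap (hn : 2 ≤ n) {g : PInj n} (hg : GapPreserving g)
    {i : ℕ} (hdom : ∀ z, 1 ≤ z → z ≤ n → z ≠ i → z ∈ g.dom) : g = 1 ∨ g = vMap n i := by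
  have hid := hg.isPartialId hn fun z z' hz hzz' hz' hzd hzd' => by
    rcases eq_or_ne z i with rfl | hzi
    · exact hzd' (hdom z' (by omega) hz' (by omega))
    · exact hzd (hdom z hz (by omega) hzi)
  by_cases hi : i ∈ g.dom
  · refine Or.inl (eq_of_R_imp (fun x y h => ⟨g.memL h, hid h⟩) fun x ⟨y, hx, _⟩ => ?_)
    rcases eq_or_ne x i with rfl | hxi
    exacts [hi, hdom x hx.1 hx.2 hxi]
  · exact Or.inr (eq_of_R_imp (fun x y h => ⟨g.memL h, fun hxi => hi (hxi ▸ ⟨y, h⟩), hid h⟩)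
      fun x ⟨y, hx, hxi, _⟩ => hdom x hx.1 hx.2 hxi)

theorem vMap_mem_of_list_prod_eq (hn : 2 ≤ n) {i : ℕ} (hi : 1 ≤ i ∧ i ≤ n)
    {l : List (PInj n)} (hl : ∀ g ∈ l, GapPreserving g) (hprod : l.prod = vMap n i) :
    vMap n i ∈ l := by
  induction l with
  | nil =>
    have : (1 : PInj n).R i i := ⟨hi, rfl⟩
    rw [← List.prod_nil, hprod] at this
    exact absurd rfl this.2.1
  | cons g t ih =>
    rw [List.prod_cons] at hprod
    have hdom : ∀ z, 1 ≤ z → z ≤ n → z ≠ i → z ∈ g.dom := fun z h1 h2 hzi =>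
      dom_mul_subset g t.prod (by rw [hprod]; exact ⟨z, ⟨h1, h2⟩, hzi, rfl⟩)
    rcases (hl g List.mem_cons_self).eq_one_or_eq_vMap hn hdom with rfl | rfl
    · rw [one_mul] at hprod
      exact List.mem_cons_of_mem _ (ih (fun b hb => hl b (List.mem_cons_of_mem _ hb)) hprod)
    · exact List.mem_cons_self

theorem uMap_top_mem_of_list_prod_eq (hn : 4 ≤ n) {l : List (PInj n)}
    (hl : ∀ g ∈ l, GapPreserving g) (hprod : l.prod = uMap n (n - 2)) : uMap n (n - 2) ∈ l := by
  have h13 : l.prod.R 1 3 := hprod ▸ uMap_R_one_three (by omega) (by omega)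
  obtain ⟨l₁, g, l₂, rfl, s, u, hsu, hlt⟩ := exists_split_of_list_prod_R_lt h13 (by omega)
  suffices g = uMap n (n - 2) by simp [this]
  refine (hl g (by simp)).eq_uMap_top hn hsu hlt fun z₁ z₂ z₃ h1 h12 h23 h3 hz₁ hz₂ hz₃ => ?_
  have := card_add_card_le (D := Finset.Icc 1 (n - 2)) (M := {z₁, z₂, z₃})
    (fun x hx => dom_list_prod_subset l₁ l₂ g
      (by rw [Finset.mem_Icc] at hx; rw [hprod]; exact ⟨x + 2, uMap_R.2 (by omega)⟩))
    (by intro z hz; simp only [Finset.mem_insert, Finset.mem_singleton] at hz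
        rw [Finset.mem_Icc]; omega)
    (by intro z hz; simp only [Finset.mem_insert, Finset.mem_singleton] at hz
        rcases hz with rfl | rfl | rfl <;> assumption)
  rw [Nat.card_Icc, Finset.card_insert_of_notMem (by simp; omega),
    Finset.card_pair (by omega)] at this
  omega

theorem uMap_mem_or_wMap_mem_of_list_prod_eq {i : ℕ} (hi : 1 ≤ i) (hin : i + 4 ≤ n)
    {l : List (PInj n)} (hl : ∀ g ∈ l, GapPreserving g) (hprod : l.prod = uMap n i) :
    uMap n i ∈ l ∨ wMap n i ∈ l := by
  have hA : l.prod.R i (i + 2) := hprod ▸ uMap_R.2 (by omega)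
  have hB : l.prod.R (i + 4) (i + 4) := hprod ▸ uMap_R.2 (by omega)
  obtain ⟨l₁, g, l₂, rfl, s, s', u, u', hs, hs', hsu, hsu', hss', hdec⟩ :=
    exists_split_of_list_prod_shift_lt hl hA hB (by omega) (by omega)
  have hJ : ∀ x ∈ Jset n i, x ∈ (l₁.prod * g).dom := fun x hx =>
    dom_list_prod_subset l₁ l₂ g (by rwa [hprod, dom_uMap (by omega)])
  obtain ⟨m, hsm, hms', hgm⟩ := (hl g (by simp)).eq_uMap_or_eq_wMap hsu hsu' hss' hdec
    fun z₁ z₂ z₃ z₄ h1 h12 h23 h34 h4 hz₁ hz₂ hz₃ hz₄ => by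
      have := card_add_card_le (D := Finset.Icc 1 i ∪ Finset.Icc (i + 4) n)
        (M := {z₁, z₂, z₃, z₄})
        (fun x hx => hJ x (by simp only [Finset.mem_union, Finset.mem_Icc] at hx; exact hx))
        (by intro z hz; simp only [Finset.mem_insert, Finset.mem_singleton] at hz
            rw [Finset.mem_Icc]; omega)
        (by intro z hz; simp only [Finset.mem_insert, Finset.mem_singleton] at hz
            rcases hz with rfl | rfl | rfl | rfl <;> assumption)
      rw [Finset.card_union_of_disjoint (Finset.disjoint_left.2 fun z hz hz' => by
          rw [Finset.mem_Icc] at hz hz'; omega), Nat.card_Icc, Nat.card_Icc,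
        Finset.card_insert_of_notMem (by simp; omega),
        Finset.card_insert_of_notMem (by simp; omega), Finset.card_pair (by omega)] at this
      omega
  have hl₁ : GapPreserving l₁.prod := GapPreserving.list_prod fun b hb => hl b (by simp [hb])
  have hi_le := hl₁.le_of_R_of_forall_le_mem_dom hs fun z h1 h2 =>
    dom_mul_subset _ g (hJ z (Or.inl ⟨h1, h2⟩))
  have hle_i := hl₁.le_of_R_of_forall_ge_mem_dom hs' fun z h1 h2 =>
    dom_mul_subset _ g (hJ z (Or.inr ⟨h1, h2⟩))
  obtain rfl : m = i := by omega
  rcases hgm with rfl | rfl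
  exacts [Or.inl (by simp), Or.inr (by simp)]

end Factorisations

section LowerBound

variable {n : ℕ}

theorem Generates.exists_mem {G : Set (PInj n)} (hG : Generates n G) {a : PInj n}
    (ha : GapPreserving a) {Q : PInj n → Prop}
    (hQ : ∀ l : List (PInj n), (∀ g ∈ l, GapPreserving g) → l.prod = a → ∃ g ∈ l, Q g) :
    ∃ g ∈ G, Q g := by
  obtain ⟨l, hlG, hl⟩ := hG.2 a ((isIOF_iff_gapPreserving a).2 ha)
  obtain ⟨g, hg, hQg⟩ :=
    hQ l (fun g hg => (isIOF_iff_gapPreserving g).1 (hG.1 g (hlG g hg))) hl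
  exact ⟨g, hlG g hg, hQg⟩

theorem Generates.exists_inv_mem {G : Set (PInj n)} (hG : Generates n G) {a : PInj n}
    (ha : GapPreserving a) {Q : PInj n → Prop}
    (hQ : ∀ l : List (PInj n), (∀ g ∈ l, GapPreserving g) → l.prod = a → ∃ g ∈ l, Q g) :
    ∃ g ∈ G, Q g.inv := by
  obtain ⟨l, hlG, hl⟩ := hG.2 a.inv ((isIOF_iff_gapPreserving _).2 ha.inv)
  have hl' : ∀ g ∈ l.reverse.map PInj.inv, GapPreserving g := by
    simp only [List.mem_map, List.mem_reverse]
    rintro _ ⟨g, hg, rfl⟩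
    exact ((isIOF_iff_gapPreserving g).1 (hG.1 g (hlG g hg))).inv
  obtain ⟨_, hmem, hQg⟩ := hQ _ hl' (by rw [← PInj.inv_list_prod, hl, PInj.inv_inv])
  obtain ⟨g, hg, rfl⟩ := List.mem_map.1 hmem
  exact ⟨g, hlG g (List.mem_reverse.1 hg), hQg⟩

/-- `w_{n-2}` is the partial identity on `{1,…,n-2}`, hence excluded. -/
def IsUOrW (n : ℕ) (g : PInj n) : Prop :=
  ¬IsPartialId g ∧ ∃ i ∈ uIndices n, g = uMap n i ∨ g = wMap n i

theorem not_isUOrW_inv (hn : 3 ≤ n) {g : PInj n} (hg : IsUOrW n g) : ¬IsUOrW n g.inv := by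
  obtain ⟨hne, i, hi, hgi⟩ := hg
  rintro ⟨-, j, hj, hgj⟩
  have hi1 : 1 ≤ i := by rw [mem_uIndices] at hi; omega
  rcases hgi with rfl | rfl
  · have h13 := inv_R.2 (uMap_R_one_three (n := n) hi1 hn)
    rcases hgj with h | h <;> rw [h] at h13
    exacts [absurd (uMap_R.1 h13) (by omega), absurd (wMap_R.1 h13) (by omega)]
  · rcases hgj with h | h
    · have h11 : (wMap n i).inv.R 1 1 := wMap_R.2 (by omega)
      rw [h] at h11
      exact absurd (uMap_R.1 h11) (by omega)
    · refine hne fun x y hxy => ?_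
      have h' : (wMap n j).R y x := h ▸ inv_R.2 hxy
      have := wMap_R.1 hxy
      have := wMap_R.1 h'
      omega

theorem exists_isUOrW_of_list_prod_eq (hn : 4 ≤ n) {i : ℕ} (hi : i ∈ uIndices n)
    {l : List (PInj n)} (hl : ∀ g ∈ l, GapPreserving g) (hprod : l.prod = uMap n i) :
    ∃ g ∈ l, IsUOrW n g ∧ g.dom = Jset n i := by
  rcases mem_uIndices.1 hi with ⟨hi1, hin⟩ | rfl
  · rcases uMap_mem_or_wMap_mem_of_list_prod_eq hi1 (by omega) hl hprod with h | h
    · exact ⟨_, h, ⟨not_isPartialId_uMap hi1 (by omega), i, hi, Or.inl rfl⟩,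
        dom_uMap (by omega)⟩
    · exact ⟨_, h, ⟨not_isPartialId_wMap (by omega), i, hi, Or.inr rfl⟩, dom_wMap (by omega)⟩
  · exact ⟨_, uMap_top_mem_of_list_prod_eq hn hl hprod,
      ⟨not_isPartialId_uMap (by omega) (by omega), n - 2, hi, Or.inl rfl⟩, dom_uMap (by omega)⟩

theorem card_image_Jset (hn : 4 ≤ n) : ((uIndices n).image (Jset n)).card = n - 3 := by
  classical
  rw [Finset.card_image_of_injOn (Jset_injOn.mono fun i hi => by
    rw [Finset.mem_coe, mem_uIndices] at hi; exact Set.mem_Iic.2 (by omega)), card_uIndices hn]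

variable {G : Finset (PInj n)}

open Classical in
theorem Generates.le_card_filter_isPartialId (hn : 2 ≤ n)
    (hG : Generates n (G : Set (PInj n))) :
    n ≤ (G.filter IsPartialId).card := by
  have hmaps : Set.MapsTo (vMap n) (Finset.Icc 1 n) (G.filter IsPartialId) := by
    intro i hi
    rw [Finset.coe_Icc] at hi
    obtain ⟨g, hg, rfl⟩ := hG.exists_mem (gapPreserving_vMap i) fun l hl hprod =>
      ⟨_, vMap_mem_of_list_prod_eq hn hi hl hprod, rfl⟩
    exact Finset.mem_filter.2 ⟨hg, fun x y h => h.2.2⟩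
  have := Finset.card_le_card_of_injOn _ hmaps (by rw [Finset.coe_Icc]; exact vMap_injOn)
  rwa [Nat.card_Icc, Nat.add_sub_cancel] at this

open Classical in
theorem Generates.le_card_filter_isUOrW (hn : 4 ≤ n) (hG : Generates n (G : Set (PInj n))) :
    n - 3 ≤ (G.filter (IsUOrW n)).card :=
  card_image_Jset hn ▸ Finset.card_le_card_of_surjOn PInj.dom fun J hJ => by
    obtain ⟨i, hi, rfl⟩ := Finset.mem_image.1 hJ
    obtain ⟨g, hg, hgU, hgd⟩ :=
      hG.exists_mem (gapPreserving_uMap i) fun l => exists_isUOrW_of_list_prod_eq hn hi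
    exact ⟨g, Finset.mem_filter.2 ⟨hg, hgU⟩, hgd⟩

open Classical in
theorem Generates.le_card_filter_isUOrW_inv (hn : 4 ≤ n)
    (hG : Generates n (G : Set (PInj n))) : n - 3 ≤ (G.filter fun g => IsUOrW n g.inv).card :=
  card_image_Jset hn ▸ Finset.card_le_card_of_surjOn (fun g => g.inv.dom) fun J hJ => by
    obtain ⟨i, hi, rfl⟩ := Finset.mem_image.1 hJ
    obtain ⟨g, hg, hgU, hgd⟩ :=
      hG.exists_inv_mem (gapPreserving_uMap i) fun l => exists_isUOrW_of_list_prod_eq hn hi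
    exact ⟨g, Finset.mem_filter.2 ⟨hg, hgU⟩, hgd⟩

open Classical in
theorem Generates.le_card (hn : 4 ≤ n) (hG : Generates n (G : Set (PInj n))) :
    3 * n - 6 ≤ G.card := by
  have hAB : Disjoint (G.filter IsPartialId) (G.filter (IsUOrW n)) :=
    Finset.disjoint_filter.2 fun g _ h h' => h'.1 h
  have hAC : Disjoint (G.filter IsPartialId) (G.filter fun g => IsUOrW n g.inv) :=
    Finset.disjoint_filter.2 fun g _ h h' => h'.1 (isPartialId_inv h)
  have hBC : Disjoint (G.filter (IsUOrW n)) (G.filter fun g => IsUOrW n g.inv) :=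
    Finset.disjoint_filter.2 fun g _ h h' => not_isUOrW_inv (by omega) h h'
  have hsub := Finset.union_subset (Finset.union_subset (Finset.filter_subset IsPartialId G)
    (Finset.filter_subset (IsUOrW n) G)) (Finset.filter_subset (fun g => IsUOrW n g.inv) G)
  have := Finset.card_le_card hsub
  rw [Finset.card_union_of_disjoint (Finset.disjoint_union_left.2 ⟨hAC, hBC⟩),
    Finset.card_union_of_disjoint hAB] at this
  have := hG.le_card_filter_isPartialId (by omega)
  have := hG.le_card_filter_isUOrW hn
  have := hG.le_card_filter_isUOrW_inv hn
  omega

end LowerBound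

/-- `rank(IOF_n^par) = 3n - 6` for `n ≥ 4`. -/
theorem stmt15 (n : ℕ) (hn : 4 ≤ n) :
    (∃ G : Finset (PInj n), Generates n (G : Set (PInj n)) ∧ G.card = 3 * n - 6) ∧
    (∀ G : Finset (PInj n), Generates n (G : Set (PInj n)) → 3 * n - 6 ≤ G.card) := by
  refine ⟨⟨gens n, gens_generates hn, ?_⟩, fun G hG => hG.le_card hn⟩
  exact (card_gens_le hn).antisymm ((gens_generates hn).le_card hn)
end

section
/- For i ∈ {1,...,n−2} and j ∈ {1,...,⌊(n−i)/2⌋}, the composite u_i ∘ u_{i+2} ∘ ... ∘ u_{i+2j−2} (denoted u_{i,j}) is the partial injection with domain {1,...,i} ∪ {i+2j+2,...,n} sending ρ ↦ ρ+2j for ρ ≤ i and ρ ↦ ρ for ρ ≥ i+2j+2. -/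
/-- The map `u_{i,j}` with domain `{1,...,i} ∪ {i+2j+2,...,n}`, sending `ρ ↦ ρ+2j`
for `ρ ≤ i` and `ρ ↦ ρ` for `ρ ≥ i+2j+2`. -/
def uMapJ (n i j : ℕ) : PInj n where
  R := fun x y => x ∈ Set.Icc 1 n ∧ y ∈ Set.Icc 1 n ∧
        ((x ≤ i ∧ y = x + 2 * j) ∨ (i + 2 * j + 2 ≤ x ∧ y = x))
  memL := by rintro x y ⟨h, _, _⟩; exact h
  memR := by rintro x y ⟨_, h, _⟩; exact h
  func := by
    rintro x y y' ⟨_, _, (⟨hx, rfl⟩ | ⟨hx, rfl⟩)⟩ ⟨_, _, (⟨hx', rfl⟩ | ⟨hx', rfl⟩)⟩ <;> omega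
  inj := by
    rintro x x' y ⟨_, _, (⟨hx, rfl⟩ | ⟨hx, rfl⟩)⟩ ⟨_, _, (⟨hx', h'⟩ | ⟨hx', h'⟩)⟩ <;> omega

section

variable {n : ℕ}

theorem uMapJ_one (i : ℕ) : uMapJ n i 1 = uMap n i := by
  ext x y
  simp only [uMapJ, uMap, mul_one]

theorem uMapJ_mul_uMapJ (i j k : ℕ) :
    uMapJ n i j * uMapJ n (i + 2 * j) k = uMapJ n i (j + k) := by
  ext x y
  simp only [uMapJ, Set.mem_Icc]
  constructor
  · rintro ⟨z, ⟨hx, -, hxz⟩, ⟨-, hy, hzy⟩⟩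
    exact ⟨hx, hy, by omega⟩
  · rintro ⟨hx, hy, ⟨hxi, hyx⟩ | ⟨hxi, rfl⟩⟩
    · exact ⟨x + 2 * j, ⟨hx, by omega, by omega⟩, ⟨by omega, hy, by omega⟩⟩
    · exact ⟨y, ⟨hx, hx, by omega⟩, ⟨hx, hy, by omega⟩⟩

end

theorem stmt16_general (n i j : ℕ) (hj1 : 1 ≤ j) :
    ((List.range j).map (fun k => uMap n (i + 2 * k))).prod = uMapJ n i j := by
  induction j, hj1 using Nat.le_induction with
  | base => simp [uMapJ_one]
  | succ j _ ih =>
    rw [List.range_succ, List.map_append, List.prod_append, ih, List.map_singleton,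
      List.prod_singleton, ← uMapJ_one, uMapJ_mul_uMapJ]

/-- the composite `u_i u_{i+2} ⋯ u_{i+2j-2}` equals `u_{i,j}`. -/
theorem stmt16 (n i j : ℕ) (hn : 4 ≤ n) (hi1 : 1 ≤ i) (hi2 : i ≤ n - 2)
    (hj1 : 1 ≤ j) (hj2 : j ≤ (n - i) / 2) :
    ((List.range j).map (fun k => uMap n (i + 2 * k))).prod = uMapJ n i j :=
  stmt16_general n i j hj1
end
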